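/- arXiv:2101.12602 — 7 statements merged into one kernel-verified Lean document; each statement's English description precedes it below -/
import Mathlib

section
/- Let {Φ_k} be a partition of 𝒳 into nonempty subsets, let ε > 0 and E_m > 0, and let x' ∈ 𝒳 be any observed pseudo-location. Suppose the obfuscation mechanism f satisfies ε-DP on each part Φ_k, and that E'(Φ_k) ≥ e^ε · E_m for every k. Then ExpEr(x') ≥ E_m. -/
open Finset

noncomputable section

/-- Points of the Euclidean plane. -/
abbrev Pt : Type := EuclideanSpace ℝ (Fin 2)

/-- if `{Φ k}` is a partition of `X` into nonempty subsets, the mechanism `f`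
satisfies `ε`-DP on each part, and `E'(Φ k) ≥ e^ε · Em` for every `k`, then the conditional
expected inference error satisfies `ExpEr(x') ≥ Em`. -/
theorem stmt0
    (X : Finset Pt) (hX : X.Nonempty)
    (pr : Pt → ℝ) (hprpos : ∀ x ∈ X, 0 < pr x) (hprsum : ∑ x ∈ X, pr x = 1)
    (f : Pt → Pt → ℝ)  -- `f x' x` denotes f(x' | x)
    (hfpos : ∀ x ∈ X, ∀ x' ∈ X, 0 < f x' x)
    (hfsum : ∀ x ∈ X, ∑ x' ∈ X, f x' x = 1)
    (ι : Type) [Fintype ι]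
    (Φ : ι → Finset Pt)
    (hne : ∀ k, (Φ k).Nonempty)
    (hdisj : ∀ k l, k ≠ l → Disjoint (Φ k) (Φ l))
    (hcover : ∀ x, x ∈ X ↔ ∃ k, x ∈ Φ k)
    (ε Em : ℝ) (hε : 0 < ε) (hEm : 0 < Em)
    (hDP : ∀ k, ∀ x ∈ Φ k, ∀ y ∈ Φ k, ∀ x' ∈ X, f x' x ≤ Real.exp ε * f x' y)
    (x' : Pt) (hx' : x' ∈ X)
    (post : Pt → ℝ)  -- `post x` denotes the posterior Pr(x | x')
    (hpost : ∀ x, post x = pr x * f x' x / ∑ y ∈ X, pr y * f x' y)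
    (hE' : ∀ k, Real.exp ε * Em ≤
      X.inf' hX (fun xh => ∑ x ∈ Φ k, (pr x / ∑ y ∈ Φ k, pr y) * dist xh x)) :
    Em ≤ X.inf' hX (fun xh => ∑ x ∈ X, post x * dist xh x) := by
  classical
  have hsub : ∀ k, Φ k ⊆ X := fun k x hx => (hcover x).mpr ⟨k, hx⟩
  set D := ∑ y ∈ X, pr y * f x' y with hD
  have hDpos : 0 < D :=
    Finset.sum_pos (fun y hy => mul_pos (hprpos y hy) (hfpos y hy x' hx')) hX
  apply Finset.le_inf'
  intro xh hxh
  have hrw : ∑ x ∈ X, post x * dist xh x = (∑ x ∈ X, pr x * f x' x * dist xh x) / D := by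
    rw [Finset.sum_div]
    exact Finset.sum_congr rfl fun x hx => by rw [hpost]; ring
  rw [hrw, le_div_iff₀ hDpos]
  have hXeq : X = Finset.univ.biUnion Φ := by
    ext x; simp [hcover x, Finset.mem_biUnion]
  have hpair : ∀ g : Pt → ℝ, ∑ x ∈ X, g x = ∑ k, ∑ x ∈ Φ k, g x := by
    intro g
    rw [hXeq, Finset.sum_biUnion]
    intro a _ b _ hab
    exact hdisj a b hab
  rw [hpair (fun x => pr x * f x' x * dist xh x), hD,
    hpair (fun y => pr y * f x' y), Finset.mul_sum]
  apply Finset.sum_le_sum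
  intro k _
  set Sk := ∑ y ∈ Φ k, pr y with hSk
  set Tk := ∑ y ∈ Φ k, pr y * f x' y with hTk
  have hSkpos : 0 < Sk :=
    Finset.sum_pos (fun y hy => hprpos y (hsub k hy)) (hne k)
  have hTkpos : 0 < Tk :=
    Finset.sum_pos (fun y hy => mul_pos (hprpos y (hsub k hy)) (hfpos y (hsub k hy) x' hx')) (hne k)
  have hexp : (0:ℝ) < Real.exp ε := Real.exp_pos ε
  -- bound (B): Sk * (exp ε * Em) ≤ ∑ pr x * dist xh x
  have hB : Sk * (Real.exp ε * Em) ≤ ∑ x ∈ Φ k, pr x * dist xh x := by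
    have h1 := (hE' k).trans (Finset.inf'_le _ hxh)
    have h2 : ∑ x ∈ Φ k, (pr x / Sk) * dist xh x = (∑ x ∈ Φ k, pr x * dist xh x) / Sk := by
      rw [Finset.sum_div]
      exact Finset.sum_congr rfl fun x hx => by ring
    rw [h2, le_div_iff₀ hSkpos] at h1
    linarith [h1]
  -- bound on f: Tk ≤ Sk * exp ε * f x' x for x ∈ Φ k
  have hA : ∀ x ∈ Φ k, Tk ≤ Sk * Real.exp ε * f x' x := by
    intro x hx
    have : ∀ y ∈ Φ k, pr y * f x' y ≤ pr y * (Real.exp ε * f x' x) := fun y hy =>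
      mul_le_mul_of_nonneg_left (hDP k y hy x hx x' hx') (le_of_lt (hprpos y (hsub k hy)))
    calc Tk ≤ ∑ y ∈ Φ k, pr y * (Real.exp ε * f x' x) := Finset.sum_le_sum this
      _ = Sk * Real.exp ε * f x' x := by rw [← Finset.sum_mul]; ring
  -- pointwise: (Tk/(Sk*exp ε)) * (pr x * dist xh x) ≤ pr x * f x' x * dist xh x
  have hptwise : ∀ x ∈ Φ k,
      Tk / (Sk * Real.exp ε) * (pr x * dist xh x) ≤ pr x * f x' x * dist xh x := by
    intro x hx
    have hfx : Tk / (Sk * Real.exp ε) ≤ f x' x := by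
      rw [div_le_iff₀ (mul_pos hSkpos hexp)]
      calc Tk ≤ Sk * Real.exp ε * f x' x := hA x hx
        _ = f x' x * (Sk * Real.exp ε) := by ring
    have hnn : 0 ≤ pr x * dist xh x :=
      mul_nonneg (le_of_lt (hprpos x (hsub k hx))) dist_nonneg
    calc Tk / (Sk * Real.exp ε) * (pr x * dist xh x) ≤ f x' x * (pr x * dist xh x) :=
          mul_le_mul_of_nonneg_right hfx hnn
      _ = pr x * f x' x * dist xh x := by ring
  calc Em * Tk = Tk / (Sk * Real.exp ε) * (Sk * (Real.exp ε * Em)) := by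
        field_simp
    _ ≤ Tk / (Sk * Real.exp ε) * ∑ x ∈ Φ k, pr x * dist xh x :=
        mul_le_mul_of_nonneg_left hB (by positivity)
    _ = ∑ x ∈ Φ k, Tk / (Sk * Real.exp ε) * (pr x * dist xh x) := by rw [Finset.mul_sum]
    _ ≤ ∑ x ∈ Φ k, pr x * f x' x * dist xh x := Finset.sum_le_sum hptwise
end
end

section
/- Let {Φ_k} be a partition of 𝒳 into nonempty subsets and let ε > 0. If the obfuscation mechanism f satisfies ε-DP on each part Φ_k, then for every observed pseudo-location x' ∈ 𝒳, ExpEr(x') ≥ ∑_k Pr(Φ_k|x') · e^{−ε} · E'(Φ_k), where Pr(Φ_k|x') = ∑_{y∈Φ_k} Pr(y|x'). -/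
open Finset

noncomputable section

/-- if `{Φ k}` is a partition of `X` into nonempty subsets and `f` satisfies
`ε`-DP on each part, then `ExpEr(x') ≥ ∑ k, Pr(Φ k | x') · e^{-ε} · E'(Φ k)`. -/
theorem stmt1
    (X : Finset Pt) (hX : X.Nonempty)
    (pr : Pt → ℝ) (hprpos : ∀ x ∈ X, 0 < pr x) (hprsum : ∑ x ∈ X, pr x = 1)
    (f : Pt → Pt → ℝ)  -- `f x' x` denotes f(x' | x)
    (hfpos : ∀ x ∈ X, ∀ x' ∈ X, 0 < f x' x)
    (hfsum : ∀ x ∈ X, ∑ x' ∈ X, f x' x = 1)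
    (ι : Type) [Fintype ι]
    (Φ : ι → Finset Pt)
    (hne : ∀ k, (Φ k).Nonempty)
    (hdisj : ∀ k l, k ≠ l → Disjoint (Φ k) (Φ l))
    (hcover : ∀ x, x ∈ X ↔ ∃ k, x ∈ Φ k)
    (ε : ℝ) (hε : 0 < ε)
    (hDP : ∀ k, ∀ x ∈ Φ k, ∀ y ∈ Φ k, ∀ x' ∈ X, f x' x ≤ Real.exp ε * f x' y)
    (x' : Pt) (hx' : x' ∈ X)
    (post : Pt → ℝ)  -- `post x` denotes the posterior Pr(x | x')
    (hpost : ∀ x, post x = pr x * f x' x / ∑ y ∈ X, pr y * f x' y)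
    :
    ∑ k : ι, (∑ y ∈ Φ k, post y) *
        (Real.exp (-ε) *
          X.inf' hX (fun xh => ∑ x ∈ Φ k, (pr x / ∑ y ∈ Φ k, pr y) * dist xh x)) ≤
      X.inf' hX (fun xh => ∑ x ∈ X, post x * dist xh x) := by
  classical
  set D := ∑ y ∈ X, pr y * f x' y with hD
  have hsub : ∀ k, Φ k ⊆ X := fun k x hx => (hcover x).2 ⟨k, hx⟩
  have hDpos : 0 < D :=
    Finset.sum_pos (fun y hy => mul_pos (hprpos y hy) (hfpos y hy x' hx')) hX
  have hXeq : X = Finset.univ.biUnion Φ := by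
    ext x; simp [Finset.mem_biUnion, hcover x]
  have hsplit : ∀ g : Pt → ℝ, ∑ x ∈ X, g x = ∑ k : ι, ∑ x ∈ Φ k, g x := by
    intro g
    rw [hXeq]
    exact Finset.sum_biUnion (fun k _ l _ hkl => hdisj k l hkl)
  apply Finset.le_inf'
  intro xh hxh
  rw [hsplit (fun x => post x * dist xh x)]
  apply Finset.sum_le_sum
  intro k _
  set Sk := ∑ y ∈ Φ k, pr y with hSk
  set Fk := ∑ y ∈ Φ k, pr y * f x' y with hFk
  have hSkpos : 0 < Sk :=
    Finset.sum_pos (fun y hy => hprpos y (hsub k hy)) (hne k)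
  have hFkpos : 0 < Fk :=
    Finset.sum_pos (fun y hy => mul_pos (hprpos y (hsub k hy)) (hfpos y (hsub k hy) x' hx')) (hne k)
  have hpostsum : ∑ y ∈ Φ k, post y = Fk / D := by
    simp only [hpost]
    rw [hFk, Finset.sum_div]
  have hpostnn : 0 ≤ ∑ y ∈ Φ k, post y := by
    rw [hpostsum]
    exact div_nonneg hFkpos.le hDpos.le
  have hinf : X.inf' hX (fun xh => ∑ x ∈ Φ k, (pr x / Sk) * dist xh x)
      ≤ ∑ x ∈ Φ k, (pr x / Sk) * dist xh x := Finset.inf'_le _ hxh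
  have step1 : (∑ y ∈ Φ k, post y) *
      (Real.exp (-ε) * X.inf' hX (fun xh => ∑ x ∈ Φ k, (pr x / Sk) * dist xh x))
      ≤ (Fk / D) * (Real.exp (-ε) * ∑ x ∈ Φ k, (pr x / Sk) * dist xh x) := by
    rw [hpostsum]
    exact mul_le_mul_of_nonneg_left
      (mul_le_mul_of_nonneg_left hinf (Real.exp_pos _).le)
      (div_nonneg hFkpos.le hDpos.le)
  refine step1.trans ?_
  rw [Finset.mul_sum, Finset.mul_sum]
  apply Finset.sum_le_sum
  intro x hxk
  have hxX : x ∈ X := hsub k hxk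
  have hd : (0:ℝ) ≤ dist xh x := dist_nonneg
  have hpx : 0 < pr x := hprpos x hxX
  have hfx : 0 < f x' x := hfpos x hxX x' hx'
  have h3 : Fk ≤ Sk * (Real.exp ε * f x' x) := by
    rw [hFk, hSk, Finset.sum_mul]
    apply Finset.sum_le_sum
    intro y hy
    exact mul_le_mul_of_nonneg_left (hDP k y hy x hxk x' hx') (hprpos y (hsub k hy)).le
  have hkey : Real.exp (-ε) * Fk ≤ Sk * f x' x := by
    have h4 : Real.exp (-ε) * Fk ≤ Real.exp (-ε) * (Sk * (Real.exp ε * f x' x)) :=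
      mul_le_mul_of_nonneg_left h3 (Real.exp_pos _).le
    have hexp : Real.exp (-ε) * Real.exp ε = 1 := by
      rw [← Real.exp_add]; simp
    calc Real.exp (-ε) * Fk ≤ Real.exp (-ε) * (Sk * (Real.exp ε * f x' x)) := h4
      _ = (Real.exp (-ε) * Real.exp ε) * (Sk * f x' x) := by ring
      _ = Sk * f x' x := by rw [hexp, one_mul]
  show Fk / D * (Real.exp (-ε) * (pr x / Sk * dist xh x)) ≤ post x * dist xh x
  rw [hpost x]
  have h1 : Fk / D * (Real.exp (-ε) * (pr x / Sk * dist xh x))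
      = (Real.exp (-ε) * Fk) * (pr x * dist xh x) / (D * Sk) := by
    field_simp
  have h2 : pr x * f x' x / D * dist xh x
      = (Sk * f x' x) * (pr x * dist xh x) / (D * Sk) := by
    field_simp
  rw [h1, h2]
  gcongr
end
end

section
/- Let Φ ⊆ 𝒳 be nonempty and let ε > 0. If the obfuscation mechanism f satisfies ε-DP on Φ, then for every observed pseudo-location x' ∈ 𝒳, min_{x̂∈𝒳} ∑_{x∈Φ} (Pr(x|x')/∑_{y∈Φ} Pr(y|x')) d(x̂,x) ≥ e^{−ε} · E'(Φ). -/
open Finset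

noncomputable section

/-! The posterior restricted to `Φ` is the prior restricted to `Φ` reweighted by the likelihoods
`f x' x`, and `ε`-DP on `Φ` says these likelihoods differ by a factor at most `e^ε` there.
Hence every normalized posterior weight is at least `e^{-ε}` times the normalized prior weight,
so for each estimate `xh` the posterior expected error dominates `e^{-ε}` times the prior one,
and the same holds for the minima over `xh`. -/

lemma div_sum_div_const {ι : Type*} (s : Finset ι) (a : ι → ℝ) {Z : ℝ} (hZ : Z ≠ 0) (x : ι) :
    a x / Z / ∑ y ∈ s, a y / Z = a x / ∑ y ∈ s, a y := by
  rw [← sum_div, div_div_div_cancel_right₀ hZ]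

lemma div_sum_le_mul_div_sum_mul {ι : Type*} {s : Finset ι} {w g : ι → ℝ} {K : ℝ}
    (hw : ∀ y ∈ s, 0 < w y) (hg : ∀ y ∈ s, 0 < g y) (hK : ∀ x ∈ s, ∀ y ∈ s, g x ≤ K * g y)
    {x : ι} (hx : x ∈ s) :
    w x / ∑ y ∈ s, w y ≤ K * (w x * g x / ∑ y ∈ s, w y * g y) := by
  have hw_sum : 0 < ∑ y ∈ s, w y := sum_pos hw ⟨x, hx⟩
  have hwg_sum : 0 < ∑ y ∈ s, w y * g y :=
    sum_pos (fun y hy => mul_pos (hw y hy) (hg y hy)) ⟨x, hx⟩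
  have hbound : ∑ y ∈ s, w y * g y ≤ K * g x * ∑ y ∈ s, w y := by
    rw [mul_sum]
    exact sum_le_sum fun y hy => by
      rw [mul_comm (K * g x)]
      exact mul_le_mul_of_nonneg_left (hK y hy x hx) (hw y hy).le
  rw [mul_div_assoc', div_le_div_iff₀ hw_sum hwg_sum]
  calc w x * ∑ y ∈ s, w y * g y ≤ w x * (K * g x * ∑ y ∈ s, w y) :=
        mul_le_mul_of_nonneg_left hbound (hw x hx).le
    _ = K * (w x * g x) * ∑ y ∈ s, w y := by ring

lemma inf'_sum_mul_dist_le_mul {α : Type*} [PseudoMetricSpace α] (T : Finset α)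
    (hT : T.Nonempty) (s : Finset α) {p q : α → ℝ} {K : ℝ}
    (hpq : ∀ x ∈ s, p x ≤ K * q x) :
    T.inf' hT (fun xh => ∑ x ∈ s, p x * dist xh x) ≤
      K * T.inf' hT (fun xh => ∑ x ∈ s, q x * dist xh x) := by
  obtain ⟨xh, hxh, hmin⟩ := exists_mem_eq_inf' hT (fun xh => ∑ x ∈ s, q x * dist xh x)
  calc T.inf' hT (fun xh => ∑ x ∈ s, p x * dist xh x)
      ≤ ∑ x ∈ s, p x * dist xh x := inf'_le _ hxh
    _ ≤ ∑ x ∈ s, K * q x * dist xh x :=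
        sum_le_sum fun x hx => mul_le_mul_of_nonneg_right (hpq x hx) dist_nonneg
    _ = K * T.inf' hT (fun xh => ∑ x ∈ s, q x * dist xh x) := by
        rw [hmin, mul_sum]; simp only [mul_assoc]

theorem stmt2_general
    (X : Finset Pt) (hX : X.Nonempty)
    (pr : Pt → ℝ) (hprpos : ∀ x ∈ X, 0 < pr x)
    (f : Pt → Pt → ℝ)  -- `f x' x` denotes f(x' | x)
    (hfpos : ∀ x ∈ X, ∀ x' ∈ X, 0 < f x' x)
    (Φ : Finset Pt) (hΦX : Φ ⊆ X)
    (ε : ℝ)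
    (hDP : ∀ x ∈ Φ, ∀ y ∈ Φ, ∀ x' ∈ X, f x' x ≤ Real.exp ε * f x' y)
    (x' : Pt) (hx' : x' ∈ X)
    (post : Pt → ℝ)  -- `post x` denotes the posterior Pr(x | x')
    (hpost : ∀ x, post x = pr x * f x' x / ∑ y ∈ X, pr y * f x' y)
    :
    Real.exp (-ε) * X.inf' hX (fun xh => ∑ x ∈ Φ, (pr x / ∑ y ∈ Φ, pr y) * dist xh x) ≤
      X.inf' hX (fun xh => ∑ x ∈ Φ, (post x / ∑ y ∈ Φ, post y) * dist xh x) := by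
  have hZ : ∑ y ∈ X, pr y * f x' y ≠ 0 :=
    (sum_pos (fun y hy => mul_pos (hprpos y hy) (hfpos y hy x' hx')) hX).ne'
  have hpost_norm : ∀ x, post x / ∑ y ∈ Φ, post y = pr x * f x' x / ∑ y ∈ Φ, pr y * f x' y :=
    fun x => by simp only [hpost]; exact div_sum_div_const Φ (fun y => pr y * f x' y) hZ x
  simp only [hpost_norm]
  rw [Real.exp_neg, inv_mul_le_iff₀ (Real.exp_pos ε)]
  exact inf'_sum_mul_dist_le_mul X hX Φ fun x hx =>
    div_sum_le_mul_div_sum_mul (fun y hy => hprpos y (hΦX hy))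
      (fun y hy => hfpos y (hΦX hy) x' hx') (fun x hx y hy => hDP x hx y hy x' hx') hx

/-- if `f` satisfies `ε`-DP on a nonempty `Φ ⊆ X`, then for every observed `x'`,
`min_{xh ∈ X} ∑_{x ∈ Φ} (Pr(x|x')/∑_{y∈Φ} Pr(y|x')) d(xh,x) ≥ e^{-ε} · E'(Φ)`. -/
theorem stmt2
    (X : Finset Pt) (hX : X.Nonempty)
    (pr : Pt → ℝ) (hprpos : ∀ x ∈ X, 0 < pr x) (hprsum : ∑ x ∈ X, pr x = 1)
    (f : Pt → Pt → ℝ)  -- `f x' x` denotes f(x' | x)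
    (hfpos : ∀ x ∈ X, ∀ x' ∈ X, 0 < f x' x)
    (hfsum : ∀ x ∈ X, ∑ x' ∈ X, f x' x = 1)
    (Φ : Finset Pt) (hΦ : Φ.Nonempty) (hΦX : Φ ⊆ X)
    (ε : ℝ) (hε : 0 < ε)
    (hDP : ∀ x ∈ Φ, ∀ y ∈ Φ, ∀ x' ∈ X, f x' x ≤ Real.exp ε * f x' y)
    (x' : Pt) (hx' : x' ∈ X)
    (post : Pt → ℝ)  -- `post x` denotes the posterior Pr(x | x')
    (hpost : ∀ x, post x = pr x * f x' x / ∑ y ∈ X, pr y * f x' y)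
    :
    Real.exp (-ε) * X.inf' hX (fun xh => ∑ x ∈ Φ, (pr x / ∑ y ∈ Φ, pr y) * dist xh x) ≤
      X.inf' hX (fun xh => ∑ x ∈ Φ, (post x / ∑ y ∈ Φ, post y) * dist xh x) :=
  stmt2_general X hX pr hprpos f hfpos Φ hΦX ε hDP x' hx' post hpost
end
end

section
/- Let Φ ⊆ 𝒳 be nonempty and let ε > 0. If the obfuscation mechanism f satisfies ε-DP on Φ, then for every observed pseudo-location x' ∈ 𝒳 and every x ∈ Φ, the normalized posterior weight satisfies Pr(x|x') / ∑_{y∈Φ} Pr(y|x') ≥ e^{−ε} · π(x) / ∑_{y∈Φ} π(y). -/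
/-!
Conditioning on `x'` reweights the prior `π` by the likelihood `y ↦ f(x'|y)`, and the global
normaliser cancels when the posterior is renormalised over `Φ`. On `Φ`, ε-DP says every likelihood
is at most `e^ε` times the likelihood of `x`, so the renormalising sum `∑_{y∈Φ} π(y) f(x'|y)` is at
most `e^ε f(x'|x) ∑_{y∈Φ} π(y)`, which is the claimed bound.
-/

open Finset

noncomputable section

lemma div_div_sum_div_const {ι K : Type*} [Semifield K] (s : Finset ι) (a : ι → K) (i : ι) {D : K}
    (hD : D ≠ 0) :
    a i / D / ∑ j ∈ s, a j / D = a i / ∑ j ∈ s, a j := by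
  rw [← sum_div, div_div_div_cancel_right₀ hD]

lemma div_mul_sum_le_mul_div_sum_mul {ι K : Type*} [Field K] [LinearOrder K] [IsStrictOrderedRing K]
    {s : Finset ι} {w g : ι → K} {c : K} {i : ι}
    (hi : i ∈ s) (hw : ∀ j ∈ s, 0 < w j) (hg : ∀ j ∈ s, 0 < g j)
    (hgi : ∀ j ∈ s, g j ≤ c * g i) :
    w i / (c * ∑ j ∈ s, w j) ≤ w i * g i / ∑ j ∈ s, w j * g j := by
  have hc : 0 < c := pos_of_mul_pos_left ((hg i hi).trans_le (hgi i hi)) (hg i hi).le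
  have hW : 0 < ∑ j ∈ s, w j := sum_pos hw ⟨i, hi⟩
  have hWg : 0 < ∑ j ∈ s, w j * g j := sum_pos (fun j hj => mul_pos (hw j hj) (hg j hj)) ⟨i, hi⟩
  have hsum : ∑ j ∈ s, w j * g j ≤ c * g i * ∑ j ∈ s, w j := by
    rw [mul_sum]
    refine sum_le_sum fun j hj => ?_
    rw [mul_comm (w j)]
    exact mul_le_mul_of_nonneg_right (hgi j hj) (hw j hj).le
  rw [div_le_div_iff₀ (mul_pos hc hW) hWg]
  calc w i * ∑ j ∈ s, w j * g j ≤ w i * (c * g i * ∑ j ∈ s, w j) :=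
        mul_le_mul_of_nonneg_left hsum (hw i hi).le
    _ = w i * g i * (c * ∑ j ∈ s, w j) := by ring

theorem stmt4_general
    (X : Finset Pt)
    (pr : Pt → ℝ) (hprpos : ∀ x ∈ X, 0 < pr x)
    (f : Pt → Pt → ℝ)  -- `f x' x` denotes f(x' | x)
    (hfpos : ∀ x ∈ X, ∀ x' ∈ X, 0 < f x' x)
    (Φ : Finset Pt) (hΦX : Φ ⊆ X)
    (ε : ℝ)
    (hDP : ∀ x ∈ Φ, ∀ y ∈ Φ, ∀ x' ∈ X, f x' x ≤ Real.exp ε * f x' y)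
    (x' : Pt) (hx' : x' ∈ X)
    (post : Pt → ℝ)  -- `post x` denotes the posterior Pr(x | x')
    (hpost : ∀ x, post x = pr x * f x' x / ∑ y ∈ X, pr y * f x' y)
    :
    ∀ x ∈ Φ, Real.exp (-ε) * pr x / ∑ y ∈ Φ, pr y ≤ post x / ∑ y ∈ Φ, post y := by
  intro x hx
  have hevidence : ∑ y ∈ X, pr y * f x' y ≠ 0 :=
    (sum_pos (fun y hy => mul_pos (hprpos y hy) (hfpos y hy x' hx')) ⟨x, hΦX hx⟩).ne'
  simp only [hpost]
  rw [div_div_sum_div_const Φ (fun y => pr y * f x' y) x hevidence, Real.exp_neg, inv_mul_eq_div,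
    div_div]
  exact div_mul_sum_le_mul_div_sum_mul hx (fun y hy => hprpos y (hΦX hy))
    (fun y hy => hfpos y (hΦX hy) x' hx') (fun y hy => hDP y hy x hx x' hx')

/-- if `f` satisfies `ε`-DP on a nonempty `Φ ⊆ X`, then for every observed `x'`
and every `x ∈ Φ`, `Pr(x|x') / ∑_{y∈Φ} Pr(y|x') ≥ e^{-ε} · π(x) / ∑_{y∈Φ} π(y)`. -/
theorem stmt4
    (X : Finset Pt) (hX : X.Nonempty)
    (pr : Pt → ℝ) (hprpos : ∀ x ∈ X, 0 < pr x) (hprsum : ∑ x ∈ X, pr x = 1)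
    (f : Pt → Pt → ℝ)  -- `f x' x` denotes f(x' | x)
    (hfpos : ∀ x ∈ X, ∀ x' ∈ X, 0 < f x' x)
    (hfsum : ∀ x ∈ X, ∑ x' ∈ X, f x' x = 1)
    (Φ : Finset Pt) (hΦ : Φ.Nonempty) (hΦX : Φ ⊆ X)
    (ε : ℝ) (hε : 0 < ε)
    (hDP : ∀ x ∈ Φ, ∀ y ∈ Φ, ∀ x' ∈ X, f x' x ≤ Real.exp ε * f x' y)
    (x' : Pt) (hx' : x' ∈ X)
    (post : Pt → ℝ)  -- `post x` denotes the posterior Pr(x | x')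
    (hpost : ∀ x, post x = pr x * f x' x / ∑ y ∈ X, pr y * f x' y)
    :
    ∀ x ∈ Φ, Real.exp (-ε) * pr x / ∑ y ∈ Φ, pr y ≤ post x / ∑ y ∈ Φ, post y :=
  stmt4_general X pr hprpos f hfpos Φ hΦX ε hDP x' hx' post hpost
end
end

section
/- Let {Φ_k} be a partition of 𝒳 into nonempty subsets, with a privacy parameter ε_k > 0 assigned to each part, let E_m > 0, and let x' ∈ 𝒳 be any observed pseudo-location. Suppose the obfuscation mechanism f satisfies ε_k-DP on each part Φ_k, and that E'(Φ_k) ≥ e^{ε_k} · E_m for every k. Then ExpEr(x') ≥ E_m. -/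
open Finset

noncomputable section

/-- if `{Φ k}` is a partition of `X` into nonempty subsets, `f` satisfies
`ε k`-DP on each part `Φ k`, and `E'(Φ k) ≥ e^{ε k} · Em` for every `k`, then
`ExpEr(x') ≥ Em`. -/
theorem stmt7
    (X : Finset Pt) (hX : X.Nonempty)
    (pr : Pt → ℝ) (hprpos : ∀ x ∈ X, 0 < pr x) (hprsum : ∑ x ∈ X, pr x = 1)
    (f : Pt → Pt → ℝ)  -- `f x' x` denotes f(x' | x)
    (hfpos : ∀ x ∈ X, ∀ x' ∈ X, 0 < f x' x)
    (hfsum : ∀ x ∈ X, ∑ x' ∈ X, f x' x = 1)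
    (ι : Type) [Fintype ι]
    (Φ : ι → Finset Pt)
    (hne : ∀ k, (Φ k).Nonempty)
    (hdisj : ∀ k l, k ≠ l → Disjoint (Φ k) (Φ l))
    (hcover : ∀ x, x ∈ X ↔ ∃ k, x ∈ Φ k)
    (ε : ι → ℝ) (Em : ℝ) (hε : ∀ k, 0 < ε k) (hEm : 0 < Em)
    (hDP : ∀ k, ∀ x ∈ Φ k, ∀ y ∈ Φ k, ∀ x' ∈ X, f x' x ≤ Real.exp (ε k) * f x' y)
    (x' : Pt) (hx' : x' ∈ X)
    (post : Pt → ℝ)  -- `post x` denotes the posterior Pr(x | x')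
    (hpost : ∀ x, post x = pr x * f x' x / ∑ y ∈ X, pr y * f x' y)
    (hE' : ∀ k, Real.exp (ε k) * Em ≤
      X.inf' hX (fun xh => ∑ x ∈ Φ k, (pr x / ∑ y ∈ Φ k, pr y) * dist xh x)) :
    Em ≤ X.inf' hX (fun xh => ∑ x ∈ X, post x * dist xh x) := by
  classical
  have hsub : ∀ k, Φ k ⊆ X := fun k x hx => (hcover x).2 ⟨k, hx⟩
  set D := ∑ y ∈ X, pr y * f x' y with hD
  have hDpos : 0 < D :=
    Finset.sum_pos (fun y hy => mul_pos (hprpos y hy) (hfpos y hy x' hx')) hX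
  have hXeq : X = Finset.univ.biUnion Φ := by
    ext x; simp [hcover x]
  apply Finset.le_inf'
  intro xh hxh
  have key : ∀ k, Em * (∑ y ∈ Φ k, pr y * f x' y) ≤
      ∑ x ∈ Φ k, pr x * f x' x * dist xh x := by
    intro k
    set P := ∑ y ∈ Φ k, pr y with hP
    have hPpos : 0 < P :=
      Finset.sum_pos (fun y hy => hprpos y (hsub k hy)) (hne k)
    set c := ∑ y ∈ Φ k, pr y * f x' y with hc
    have hcpos : 0 < c :=
      Finset.sum_pos (fun y hy => mul_pos (hprpos y (hsub k hy))
        (hfpos y (hsub k hy) x' hx')) (hne k)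
    -- the E' bound at xh
    have hS : Real.exp (ε k) * Em ≤ ∑ x ∈ Φ k, (pr x / P) * dist xh x :=
      le_trans (hE' k) (Finset.inf'_le _ hxh)
    have hSd : Real.exp (ε k) * Em * P ≤ ∑ x ∈ Φ k, pr x * dist xh x := by
      have := (mul_le_mul_iff_left₀ hPpos).mpr hS
      calc Real.exp (ε k) * Em * P ≤ (∑ x ∈ Φ k, (pr x / P) * dist xh x) * P := this
        _ = ∑ x ∈ Φ k, pr x * dist xh x := by
            rw [Finset.sum_mul]
            apply Finset.sum_congr rfl
            intro x hx
            field_simp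
    -- pointwise: c ≤ exp (ε k) * P * f x' x for x ∈ Φ k
    have hpt : ∀ x ∈ Φ k, c ≤ Real.exp (ε k) * P * f x' x := by
      intro x hx
      calc c ≤ ∑ y ∈ Φ k, pr y * (Real.exp (ε k) * f x' x) := by
              apply Finset.sum_le_sum
              intro y hy
              exact mul_le_mul_of_nonneg_left (hDP k y hy x hx x' hx')
                (hprpos y (hsub k hy)).le
        _ = Real.exp (ε k) * P * f x' x := by rw [← Finset.sum_mul]; ring
    have hmain : ∑ x ∈ Φ k, pr x * (c / (Real.exp (ε k) * P)) * dist xh x ≤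
        ∑ x ∈ Φ k, pr x * f x' x * dist xh x := by
      apply Finset.sum_le_sum
      intro x hx
      have hd : (0:ℝ) ≤ dist xh x := dist_nonneg
      have h1 : c / (Real.exp (ε k) * P) ≤ f x' x := by
        rw [div_le_iff₀ (mul_pos (Real.exp_pos _) hPpos)]
        linarith [hpt x hx]
      have := mul_le_mul_of_nonneg_left h1 (hprpos x (hsub k hx)).le
      exact mul_le_mul_of_nonneg_right this hd
    calc Em * c = (c / (Real.exp (ε k) * P)) * (Real.exp (ε k) * Em * P) := by
          field_simp
      _ ≤ (c / (Real.exp (ε k) * P)) * ∑ x ∈ Φ k, pr x * dist xh x :=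
          mul_le_mul_of_nonneg_left hSd
            (div_nonneg hcpos.le (mul_pos (Real.exp_pos _) hPpos).le)
      _ = ∑ x ∈ Φ k, pr x * (c / (Real.exp (ε k) * P)) * dist xh x := by
          rw [Finset.mul_sum]; apply Finset.sum_congr rfl; intro x hx; ring
      _ ≤ ∑ x ∈ Φ k, pr x * f x' x * dist xh x := hmain
  have hPD : Set.PairwiseDisjoint (↑(Finset.univ : Finset ι)) Φ :=
    fun k _ l _ hkl => hdisj k l hkl
  have htotal : Em * D ≤ ∑ x ∈ X, pr x * f x' x * dist xh x := by
    have h1 : D = ∑ k, ∑ y ∈ Φ k, pr y * f x' y := by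
      rw [hD, hXeq, Finset.sum_biUnion hPD]
    have h2 : ∑ x ∈ X, pr x * f x' x * dist xh x =
        ∑ k, ∑ x ∈ Φ k, pr x * f x' x * dist xh x := by
      rw [hXeq, Finset.sum_biUnion hPD]
    rw [h1, h2, Finset.mul_sum]
    exact Finset.sum_le_sum fun k _ => key k
  have hsum : ∑ x ∈ X, post x * dist xh x =
      (∑ x ∈ X, pr x * f x' x * dist xh x) / D := by
    rw [Finset.sum_div]
    apply Finset.sum_congr rfl
    intro x hx
    rw [hpost x]
    ring
  rw [hsum, le_div_iff₀ hDpos]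
  linarith [htotal]
end
end

section
/- Let ε > 0 and D > 0, and let f be the exponential mechanism on 𝒳 with sensitivity D. Then for all x, y ∈ 𝒳 with d(x,y) ≤ D and all x' ∈ 𝒳, f(x'|x)/f(x'|y) ≤ exp( (ε/(2D)) · (d(x,y) + D) ). In particular, the mechanism is (ε_g, D)-geo-indistinguishable with ε_g = ε/(2D) on every subset of 𝒳 of diameter at most D. -/
open Finset

noncomputable section

/-- the exponential mechanism with sensitivity `D` satisfies
`f(x'|x)/f(x'|y) ≤ exp((ε/(2D)) (d(x,y) + D))` for all `x, y ∈ X` with `d(x,y) ≤ D`, i.e. it is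
`(ε/(2D), D)`-geo-indistinguishable on every subset of `X` of diameter at most `D`. -/
theorem stmt8
    (X : Finset Pt) (hX : X.Nonempty)
    (ε D : ℝ) (hε : 0 < ε) (hD : 0 < D)
    (f : Pt → Pt → ℝ)  -- `f x' x` denotes f(x' | x)
    (hf : ∀ x ∈ X, ∀ x' ∈ X, f x' x =
      Real.exp (-(ε * dist x x') / (2 * D)) / ∑ s ∈ X, Real.exp (-(ε * dist x s) / (2 * D))) :
    ∀ x ∈ X, ∀ y ∈ X, dist x y ≤ D → ∀ x' ∈ X,
      f x' x / f x' y ≤ Real.exp ((ε / (2 * D)) * (dist x y + D)) := by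
  intro x hx y hy hxy x' hx'
  have h2D : (0:ℝ) < 2 * D := by linarith
  set c := ε / (2 * D) with hc
  have hcpos : 0 < c := div_pos hε h2D
  rw [hf x hx x' hx', hf y hy x' hx']
  set A := Real.exp (-(ε * dist x x') / (2 * D)) with hA
  set B := Real.exp (-(ε * dist y x') / (2 * D)) with hB
  set Sx := ∑ s ∈ X, Real.exp (-(ε * dist x s) / (2 * D)) with hSx
  set Sy := ∑ s ∈ X, Real.exp (-(ε * dist y s) / (2 * D)) with hSy
  have hApos : 0 < A := Real.exp_pos _
  have hBpos : 0 < B := Real.exp_pos _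
  have hSxpos : 0 < Sx := Finset.sum_pos (fun s _ => Real.exp_pos _) hX
  have hSypos : 0 < Sy := Finset.sum_pos (fun s _ => Real.exp_pos _) hX
  have h1 : A ≤ Real.exp (c * dist x y) * B := by
    rw [hA, hB, ← Real.exp_add, Real.exp_le_exp]
    rw [hc, div_mul_eq_mul_div, ← add_div, div_le_div_iff_of_pos_right h2D]
    nlinarith [mul_le_mul_of_nonneg_left (dist_triangle y x x') hε.le, dist_comm x y]
  have h2 : Sy ≤ Real.exp (c * dist x y) * Sx := by
    rw [hSy, hSx, Finset.mul_sum]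
    apply Finset.sum_le_sum
    intro s hs
    rw [← Real.exp_add, Real.exp_le_exp]
    rw [hc, div_mul_eq_mul_div, ← add_div, div_le_div_iff_of_pos_right h2D]
    nlinarith [mul_le_mul_of_nonneg_left (dist_triangle x y s) hε.le, dist_comm x y]
  have heq : A / Sx / (B / Sy) = A * Sy / (Sx * B) := by
    field_simp
  rw [heq, div_le_iff₀ (by positivity)]
  calc A * Sy ≤ (Real.exp (c * dist x y) * B) * (Real.exp (c * dist x y) * Sx) :=
        mul_le_mul h1 h2 hSypos.le (by positivity)
    _ = Real.exp (c * dist x y) * Real.exp (c * dist x y) * (Sx * B) := by ring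
    _ = Real.exp (c * dist x y + c * dist x y) * (Sx * B) := by rw [Real.exp_add]
    _ ≤ Real.exp (c * (dist x y + D)) * (Sx * B) := by
        gcongr
        nlinarith [mul_le_mul_of_nonneg_left hxy hcpos.le]
end
end

section
/- Let {Φ_k} be a partition of 𝒳 into nonempty subsets, each Φ_k with diameter D(Φ_k) > 0, and let D_min = min_k D(Φ_k). Let ε > 0 and define the piecewise mechanism f(x'|x) = f_{Φ_k}(x'|x) whenever x ∈ Φ_k, where f_{Φ_k} is the exponential mechanism on 𝒳 with sensitivity D(Φ_k). Then for all x, y, x' ∈ 𝒳, f(x'|x)/f(x'|y) ≤ exp( ε · D(𝒳) / D_min ); that is, the personalized sensitivity mechanism satisfies (ε D(𝒳)/D_min)-DP on the whole domain 𝒳. -/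
open Finset

noncomputable section

theorem stmt12_aux {α : Type*} [PseudoMetricSpace α]
    (X : Finset α) (hX : X.Nonempty)
    (ι : Type) [Fintype ι] [Nonempty ι]
    (Φ : ι → Finset α)
    (hne : ∀ k, (Φ k).Nonempty)
    (hcover : ∀ x, x ∈ X ↔ ∃ k, x ∈ Φ k)
    (Dk : ι → ℝ)
    (hDkpos : ∀ k, 0 < Dk k)
    (Dmin : ℝ) (hDmin : Dmin = Finset.univ.inf' Finset.univ_nonempty Dk)
    (DX : ℝ) (hDX : DX = (X ×ˢ X).sup' (hX.product hX) fun p => dist p.1 p.2)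
    (ε : ℝ) (hε : 0 < ε)
    (f : α → α → ℝ)
    (hf : ∀ k, ∀ x ∈ Φ k, ∀ x' ∈ X, f x' x =
      Real.exp (-(ε * dist x x') / (2 * Dk k)) /
        ∑ s ∈ X, Real.exp (-(ε * dist x s) / (2 * Dk k))) :
    ∀ x ∈ X, ∀ y ∈ X, ∀ x' ∈ X,
      f x' x / f x' y ≤ Real.exp (ε * DX / Dmin) := by
  intro x hx y hy x' hx'
  obtain ⟨k, hk⟩ := (hcover x).1 hx
  obtain ⟨l, hl⟩ := (hcover y).1 hy
  have hDminpos : 0 < Dmin := by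
    rw [hDmin]
    exact (Finset.lt_inf'_iff _).2 fun m _ => hDkpos m
  have hDminle : ∀ m, Dmin ≤ Dk m := fun m => by
    rw [hDmin]; exact Finset.inf'_le _ (Finset.mem_univ m)
  have hd : ∀ a ∈ X, ∀ b ∈ X, dist a b ≤ DX := by
    intro a ha b hb
    rw [hDX]
    exact Finset.le_sup' (f := fun p : α × α => dist p.1 p.2)
      (Finset.mk_mem_product ha hb)
  have hDX0 : 0 ≤ DX := dist_nonneg.trans (hd x hx x hx)
  set t := ε * DX / (2 * Dmin) with ht
  set E := Real.exp (-t) with hE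
  have hEpos : 0 < E := Real.exp_pos _
  have hexple1 : ∀ m, ∀ a b : α,
      Real.exp (-(ε * dist a b) / (2 * Dk m)) ≤ 1 := by
    intro m a b
    rw [Real.exp_le_one_iff, neg_div]
    exact neg_nonpos.2 (div_nonneg (by positivity) (by linarith [hDkpos m]))
  have hexpge : ∀ m, ∀ a ∈ X, ∀ b ∈ X,
      E ≤ Real.exp (-(ε * dist a b) / (2 * Dk m)) := by
    intro m a ha b hb
    rw [hE, Real.exp_le_exp, neg_div, neg_le_neg_iff, ht]
    exact div_le_div₀ (by positivity) (by nlinarith [hd a ha b hb])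
      (by linarith) (by nlinarith [hDminle m])
  have hn : (0:ℝ) < X.card := by exact_mod_cast Finset.card_pos.2 hX
  have hSx : (X.card : ℝ) * E ≤ ∑ s ∈ X, Real.exp (-(ε * dist x s) / (2 * Dk k)) := by
    have := Finset.card_nsmul_le_sum X
      (fun s => Real.exp (-(ε * dist x s) / (2 * Dk k))) E
      (fun s hs => hexpge k x hx s hs)
    simpa [nsmul_eq_mul] using this
  have hSy : (∑ s ∈ X, Real.exp (-(ε * dist y s) / (2 * Dk l))) ≤ X.card := by
    have := Finset.sum_le_card_nsmul X
      (fun s => Real.exp (-(ε * dist y s) / (2 * Dk l))) 1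
      (fun s _ => hexple1 l y s)
    simpa [nsmul_eq_mul] using this
  have hSypos : 0 < ∑ s ∈ X, Real.exp (-(ε * dist y s) / (2 * Dk l)) :=
    Finset.sum_pos (fun s _ => Real.exp_pos _) hX
  have hfx : f x' x ≤ 1 / ((X.card : ℝ) * E) := by
    rw [hf k x hk x' hx']
    exact div_le_div₀ (by positivity) (hexple1 k x x') (by positivity) hSx
  have hfy : E / (X.card : ℝ) ≤ f x' y := by
    rw [hf l y hl x' hx']
    exact div_le_div₀ (Real.exp_pos _).le (hexpge l y hy x' hx') hSypos hSy
  have hfinal : f x' x / f x' y ≤ (1 / ((X.card : ℝ) * E)) / (E / (X.card : ℝ)) := by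
    have hfxnn : 0 ≤ f x' x := by
      rw [hf k x hk x' hx']; positivity
    exact div_le_div₀ (by positivity) hfx (by positivity) hfy
  refine hfinal.trans_eq ?_
  have hEE : E * E = Real.exp (-(ε * DX / Dmin)) := by
    rw [hE, ← Real.exp_add]
    congr 1
    field_simp [ht]
    rw [ht]; field_simp; ring
  have hne' : ((X.card : ℝ)) ≠ 0 := ne_of_gt hn
  have hEne : E ≠ 0 := ne_of_gt hEpos
  rw [show (1:ℝ) / ((X.card : ℝ) * E) / (E / (X.card : ℝ)) = 1 / (E * E) by
    field_simp, hEE, one_div, ← Real.exp_neg, neg_neg]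

/-- the personalized sensitivity mechanism (which, on each part `Φ k` of a
partition of `X`, is the exponential mechanism with sensitivity `D(Φ k)`) satisfies
`(ε D(X)/D_min)`-DP on the whole domain `X`, where `D_min = min_k D(Φ k)`. -/
theorem stmt12
    (X : Finset Pt) (hX : X.Nonempty)
    (ι : Type) [Fintype ι] [Nonempty ι]
    (Φ : ι → Finset Pt)
    (hne : ∀ k, (Φ k).Nonempty)
    (hdisj : ∀ k l, k ≠ l → Disjoint (Φ k) (Φ l))
    (hcover : ∀ x, x ∈ X ↔ ∃ k, x ∈ Φ k)
    (Dk : ι → ℝ)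
    (hDk : ∀ k, Dk k = ((Φ k) ×ˢ (Φ k)).sup' ((hne k).product (hne k)) fun p => dist p.1 p.2)
    (hDkpos : ∀ k, 0 < Dk k)
    (Dmin : ℝ) (hDmin : Dmin = Finset.univ.inf' Finset.univ_nonempty Dk)
    (DX : ℝ) (hDX : DX = (X ×ˢ X).sup' (hX.product hX) fun p => dist p.1 p.2)
    (ε : ℝ) (hε : 0 < ε)
    (f : Pt → Pt → ℝ)  -- piecewise mechanism: on `Φ k` it has sensitivity `Dk k`
    (hf : ∀ k, ∀ x ∈ Φ k, ∀ x' ∈ X, f x' x =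
      Real.exp (-(ε * dist x x') / (2 * Dk k)) /
        ∑ s ∈ X, Real.exp (-(ε * dist x s) / (2 * Dk k))) :
    ∀ x ∈ X, ∀ y ∈ X, ∀ x' ∈ X,
      f x' x / f x' y ≤ Real.exp (ε * DX / Dmin) :=
  stmt12_aux X hX ι Φ hne hcover Dk hDkpos Dmin hDmin DX hDX ε hε f hf
end
end
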